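/- Suppose k ≥ 3. Let G be a k-regular undirected connected graph and U its Grover transfer matrix. Then the negative support of U² satisfies (U²)⁻ = S U⁺ + U⁺ S, where S = S(G) is the shift operator and U⁺ is the positive support of U. -/

import Mathlib

open Matrix Polynomial

noncomputable section

variable {V : Type} [Fintype V] [DecidableEq V]

/-- The set of symmetric arcs of a simple graph `G`: ordered pairs of adjacent vertices. -/
abbrev GArc (G : SimpleGraph V) : Type := {p : V × V // G.Adj p.1 p.2}

/-- The origin of an arc. -/
def arcO {G : SimpleGraph V} (a : GArc G) : V := a.1.1

/-- The terminus of an arc. -/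
def arcT {G : SimpleGraph V} (a : GArc G) : V := a.1.2

/-- The inverse of an arc. -/
def arcInv {G : SimpleGraph V} (a : GArc G) : GArc G := ⟨(a.1.2, a.1.1), a.2.symm⟩

/-- The boundary matrix `K`, with `K_{v,a} = δ_{v,t(a)} / √(deg t(a))`. -/
def bdK (G : SimpleGraph V) [DecidableRel G.Adj] : Matrix V (GArc G) ℂ :=
  fun v a => if v = arcT a then ((1 / Real.sqrt (G.degree (arcT a)) : ℝ) : ℂ) else 0

/-- The coin operator `C = 2K*K - I`. -/
def coinC (G : SimpleGraph V) [DecidableRel G.Adj] : Matrix (GArc G) (GArc G) ℂ :=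
  (2 : ℂ) • ((bdK G)ᴴ * bdK G) - 1

/-- The shift operator `S`, with `S_{ab} = δ_{a,b⁻¹}`. -/
def shiftS (G : SimpleGraph V) : Matrix (GArc G) (GArc G) ℂ :=
  fun a b => if a = arcInv b then 1 else 0

/-- The perturbed shift `S_θ`, with `(S_θ)_{ab} = e^{iθ(b)} δ_{a,b⁻¹}`. -/
def shiftStheta (G : SimpleGraph V) (θ : GArc G → ℝ) : Matrix (GArc G) (GArc G) ℂ :=
  fun a b => if a = arcInv b then Complex.exp ((θ b : ℂ) * Complex.I) else 0

/-- The Grover transfer matrix `U = SC`. -/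
def groverU (G : SimpleGraph V) [DecidableRel G.Adj] : Matrix (GArc G) (GArc G) ℂ :=
  shiftS G * coinC G

/-- The transfer matrix `U_θ = S_θ C`. -/
def transferU (G : SimpleGraph V) [DecidableRel G.Adj] (θ : GArc G → ℝ) :
    Matrix (GArc G) (GArc G) ℂ :=
  shiftStheta G θ * coinC G

/-- The diagonal matrix `D_θ` with `(D_θ)_{ab} = e^{iθ(a)} δ_{ab}`. -/
def Dtheta (G : SimpleGraph V) (θ : GArc G → ℝ) : Matrix (GArc G) (GArc G) ℂ :=
  Matrix.diagonal fun a => Complex.exp ((θ a : ℂ) * Complex.I)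

/-- The positive support of a (real-valued) complex matrix. -/
def suppPos {α : Type} (M : Matrix α α ℂ) : Matrix α α ℂ :=
  fun a b => if 0 < (M a b).re then 1 else 0

/-- The negative support of a (real-valued) complex matrix. -/
def suppNeg {α : Type} (M : Matrix α α ℂ) : Matrix α α ℂ :=
  fun a b => if (M a b).re < 0 then 1 else 0

/-- The positive support of a real matrix. -/
def suppPosR {α : Type} (M : Matrix α α ℝ) : Matrix α α ℝ :=
  fun a b => if 0 < M a b then 1 else 0

/-- The negative support of a real matrix. -/
def suppNegR {α : Type} (M : Matrix α α ℝ) : Matrix α α ℝ :=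
  fun a b => if M a b < 0 then 1 else 0

/-- A digraph on `V`: an irreflexive (Boolean) arc relation. -/
structure Dgraph (V : Type) where
  adj : V → V → Bool
  loopless : ∀ v, adj v v = false

namespace Dgraph

/-- `(x,y)` is an arc of `D`. -/
def Adj (D : Dgraph V) (x y : V) : Prop := D.adj x y = true

instance (D : Dgraph V) : DecidableRel D.Adj := fun _ _ => by unfold Adj; infer_instance

/-- The underlying (undirected simple) graph `G^±`. -/
def underlying (D : Dgraph V) : SimpleGraph V where
  Adj x y := D.Adj x y ∨ D.Adj y x
  symm := ⟨fun _ _ h => h.symm⟩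
  loopless := ⟨fun v h => by
    rcases h with h | h <;> exact absurd h (by simp [Adj, D.loopless v])⟩

instance (D : Dgraph V) : DecidableRel D.underlying.Adj :=
  fun x y => inferInstanceAs (Decidable (D.Adj x y ∨ D.Adj y x))

/-- The transpose digraph `G⁻¹`. -/
def transpose (D : Dgraph V) : Dgraph V where
  adj x y := D.adj y x
  loopless := D.loopless

end Dgraph

/-- The `η`-function of a digraph `D`: `η` on `A∖A⁻¹`, `-η` on `A⁻¹∖A`, `0` on digons. -/
def etaFun (D : Dgraph V) (η : ℝ) (a : GArc D.underlying) : ℝ :=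
  if D.Adj (arcO a) (arcT a) then (if D.Adj (arcT a) (arcO a) then 0 else η) else -η

/-- The `η`-Hermitian adjacency matrix `H_η`. -/
def Heta (D : Dgraph V) (η : ℝ) : Matrix V V ℂ :=
  fun x y =>
    if D.Adj x y then (if D.Adj y x then 1 else Complex.exp ((η : ℂ) * Complex.I))
    else if D.Adj y x then Complex.exp (-(η : ℂ) * Complex.I) else 0

/-- The diagonal matrix `D^{-1/2}` of inverse square roots of degrees. -/
def degHalfInv (D : Dgraph V) : Matrix V V ℂ :=
  Matrix.diagonal fun x => ((1 / Real.sqrt (D.underlying.degree x) : ℝ) : ℂ)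

/-- The normalized `η`-Hermitian adjacency matrix `H̃_η = D^{-1/2} H_η D^{-1/2}`. -/
def normHeta (D : Dgraph V) (η : ℝ) : Matrix V V ℂ :=
  degHalfInv D * Heta D η * degHalfInv D

/-- The multiset of preimages of `μ` under `φ(z) = (z + z⁻¹)/2` on the unit circle:
the distinct roots of `z² - 2μz + 1`. -/
def phiInv (μ : ℂ) : Multiset ℂ :=
  ((X ^ 2 - Polynomial.C (2 * μ) * X + 1 : Polynomial ℂ).roots).dedup

/-- A closed path in a graph: a nonempty chain of arcs returning to its start. -/
structure ClosedPath (G : SimpleGraph V) where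
  arcs : List (GArc G)
  ne : arcs ≠ []
  chain : arcs.Chain' fun a b => arcT a = arcO b
  closed : arcT (arcs.getLast ne) = arcO (arcs.head ne)

/-- `ℐ(c) = Σ_j θ(a_j)` for a closed path `c`. -/
def pathSum {G : SimpleGraph V} (θ : GArc G → ℝ) (c : ClosedPath G) : ℝ :=
  (c.arcs.map θ).sum

/-- `x ∈ 2πℤ`. -/
def in2piZ (x : ℝ) : Prop := ∃ m : ℤ, x = 2 * Real.pi * m

/-- `x ∈ 2π(ℤ + 1/2)`. -/
def in2piZhalf (x : ℝ) : Prop := ∃ m : ℤ, x = 2 * Real.pi * (m + 1 / 2)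

/-- The matrix `F_t` with `(F_t)_{x,a} = δ_{x,t(a)}`. -/
def Ft (G : SimpleGraph V) : Matrix V (GArc G) ℂ := fun x a => if x = arcT a then 1 else 0

/-- The matrix `F_o` with `(F_o)_{x,a} = δ_{x,o(a)}`. -/
def Fo (G : SimpleGraph V) : Matrix V (GArc G) ℂ := fun x a => if x = arcO a then 1 else 0

/-- The 0/1 matrix `R` with `R_{ab} = 1` iff `m(a,b) = (t(b),o(a)) ∈ A(G) ∩ A(G)⁻¹`. -/
def Rmat (D : Dgraph V) : Matrix (GArc D.underlying) (GArc D.underlying) ℂ :=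
  fun a b => if D.Adj (arcT b) (arcO a) ∧ D.Adj (arcO a) (arcT b) then 1 else 0

/-- `U_θ^{(n,+)}`: the 0/1 matrix with `(a,b)` entry `1` iff `Re(D_θ U_θⁿ)_{ab} > 0`. -/
def suppPow (D : Dgraph V) (η : ℝ) (n : ℕ) :
    Matrix (GArc D.underlying) (GArc D.underlying) ℂ :=
  suppPos (Dtheta D.underlying (etaFun D η) * transferU D.underlying (etaFun D η) ^ n)

/-- `U_θ^{(n,−)}`: the 0/1 matrix with `(a,b)` entry `1` iff `Re(D_θ U_θⁿ)_{ab} < 0`. -/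
def suppPowNeg (D : Dgraph V) (η : ℝ) (n : ℕ) :
    Matrix (GArc D.underlying) (GArc D.underlying) ℂ :=
  suppNeg (Dtheta D.underlying (etaFun D η) * transferU D.underlying (etaFun D η) ^ n)

/-- The number of digons of a digraph. -/
def digonCount (D : Dgraph V) : ℕ :=
  (Finset.univ.filter fun p : V × V => D.Adj p.1 p.2 ∧ D.Adj p.2 p.1).card / 2

/-- The digraph `Y_{a,n-a}`: two complete (digon) blocks `[a]` and `[n]∖[a]`, with all
arcs from the first block to the second. -/
def Ydigraph (n a : ℕ) : Dgraph (Fin n) where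
  adj x y := decide ((x ≠ y) ∧
    ((x.val < a ∧ y.val < a) ∨ (a ≤ x.val ∧ a ≤ y.val) ∨ (x.val < a ∧ a ≤ y.val)))
  loopless := fun v => by simp

/-- The shift operator as a real matrix. -/
def shiftSR (G : SimpleGraph V) : Matrix (GArc G) (GArc G) ℝ :=
  fun a b => if a = arcInv b then 1 else 0

/-- The Grover transfer matrix as a real matrix, given by its entries
`U_{ab} = (2/deg t(b)) δ_{t(b),o(a)} − δ_{a⁻¹,b}`. -/
def groverEnt (G : SimpleGraph V) [DecidableRel G.Adj] : Matrix (GArc G) (GArc G) ℝ :=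
  fun a b => 2 / (G.degree (arcT b)) * (if arcT b = arcO a then 1 else 0)
    - (if arcInv a = b then 1 else 0)


/-! Write `U = SC = P - S` with `P = 2SK*K`, i.e. `P_{ab} = (2/deg t(b)) δ_{t(b),o(a)}`. Since
`S² = 1`, `U² = P² - PS - SP + 1`, and the three products are explicit: `P²_{ab}` is
`4/(deg o(a) deg t(b))` or `0`, `(PS)_{ab}` is `2/deg o(a)` when `o(b) = o(a)`, and `(SP)_{ab}` is
`2/deg t(b)` when `t(b) = t(a)`. When all degrees are at least `3` the first is smaller than the
other two, so `U²_{ab} < 0` exactly when `a ≠ b` share their origin or their terminus; these are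
the supports of `U⁺S` and `SU⁺`. -/

section GroverSquare

variable {G : SimpleGraph V}

section Arcs

omit [Fintype V] [DecidableEq V]

@[simp] lemma arcO_arcInv (a : GArc G) : arcO (arcInv a) = arcT a := rfl

@[simp] lemma arcT_arcInv (a : GArc G) : arcT (arcInv a) = arcO a := rfl

@[simp] lemma arcInv_arcInv (a : GArc G) : arcInv (arcInv a) = a := rfl

lemma arcInv_involutive : Function.Involutive (arcInv (G := G)) := arcInv_arcInv

lemma arc_ext {a b : GArc G} (ho : arcO a = arcO b) (ht : arcT a = arcT b) : a = b :=
  Subtype.ext (Prod.ext ho ht)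

end Arcs

variable [DecidableRel G.Adj]

lemma shiftSR_mul_apply (M : Matrix (GArc G) (GArc G) ℝ) (a b : GArc G) :
    (shiftSR G * M) a b = M (arcInv a) b := by
  have hinv (c : GArc G) : a = arcInv c ↔ c = arcInv a := by
    rw [← arcInv_involutive.eq_iff, eq_comm]
  simp [mul_apply, shiftSR, hinv]

lemma mul_shiftSR_apply (M : Matrix (GArc G) (GArc G) ℝ) (a b : GArc G) :
    (M * shiftSR G) a b = M a (arcInv b) := by
  simp [mul_apply, shiftSR]

lemma shiftSR_mul_shiftSR : shiftSR G * shiftSR G = 1 := by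
  ext a b
  simp [shiftSR_mul_apply, shiftSR, one_apply, arcInv_involutive.eq_iff]

/-- The part `2SK*K` of the Grover matrix `U = SC = 2SK*K - S`. -/
def groverP (G : SimpleGraph V) [DecidableRel G.Adj] : Matrix (GArc G) (GArc G) ℝ :=
  fun a b => if arcT b = arcO a then 2 / (G.degree (arcT b) : ℝ) else 0

lemma groverEnt_eq_sub : groverEnt G = groverP G - shiftSR G := by
  ext a b
  simp [groverEnt, groverP, shiftSR, arcInv_involutive.eq_iff]

lemma groverP_mul_groverP_apply (a b : GArc G) :
    (groverP G * groverP G) a b =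
      if G.Adj (arcT b) (arcO a) then 4 / ((G.degree (arcO a) : ℝ) * G.degree (arcT b)) else 0 := by
  rw [mul_apply]
  split_ifs with hadj
  · rw [Finset.sum_eq_single ⟨(arcT b, arcO a), hadj⟩]
    · show (if arcO a = arcO a then 2 / (G.degree (arcO a) : ℝ) else 0)
          * (if arcT b = arcT b then 2 / (G.degree (arcT b) : ℝ) else 0) = _
      rw [if_pos rfl, if_pos rfl]
      ring
    · rintro c - hc
      simp only [groverP, mul_ite, ite_mul, zero_mul, mul_zero]
      split_ifs with h1 h2
      · exact absurd (arc_ext h1.symm h2) hc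
      all_goals rfl
    · simp
  · refine Finset.sum_eq_zero fun c _ => ?_
    simp only [groverP, mul_ite, ite_mul, zero_mul, mul_zero]
    split_ifs with h1 h2
    · exact absurd (h1 ▸ h2 ▸ c.2) hadj
    all_goals rfl

lemma groverEnt_mul_self_apply (a b : GArc G) :
    (groverEnt G * groverEnt G) a b =
      (if G.Adj (arcT b) (arcO a) then 4 / ((G.degree (arcO a) : ℝ) * G.degree (arcT b)) else 0)
        - (if arcO b = arcO a then 2 / (G.degree (arcO b) : ℝ) else 0)
        - (if arcT b = arcT a then 2 / (G.degree (arcT b) : ℝ) else 0)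
        + (if a = b then 1 else 0) := by
  have hsq : groverEnt G * groverEnt G =
      groverP G * groverP G - groverP G * shiftSR G - shiftSR G * groverP G + 1 := by
    rw [groverEnt_eq_sub, sub_mul, mul_sub, mul_sub, shiftSR_mul_shiftSR]
    abel
  rw [hsq]
  simp only [Matrix.add_apply, Matrix.sub_apply, groverP_mul_groverP_apply, mul_shiftSR_apply,
    shiftSR_mul_apply, groverP, one_apply, arcT_arcInv, arcO_arcInv]
  -- the two sides differ only in their `Decidable` instances
  rfl

lemma groverEnt_pos_iff (hdeg : ∀ v, 2 ≤ G.degree v) (a b : GArc G) :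
    0 < groverEnt G a b ↔ arcT b = arcO a ∧ a ≠ arcInv b := by
  have hd : (2 : ℝ) ≤ G.degree (arcT b) := by exact_mod_cast hdeg _
  rw [groverEnt_eq_sub, Matrix.sub_apply]
  by_cases hinv : a = arcInv b
  · subst hinv
    simp only [groverP, shiftSR, arcO_arcInv, if_true, ne_eq, not_true_eq_false, and_false,
      iff_false, not_lt]
    rw [sub_nonpos, div_le_one (by positivity)]
    exact hd
  · simp only [groverP, shiftSR, hinv, if_false, sub_zero, ne_eq, not_false_eq_true, and_true]
    split_ifs with h
    · simp only [h, iff_true]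
      exact div_pos two_pos (by linarith)
    · simp [h]

lemma groverEnt_mul_self_neg_iff (hdeg : ∀ v, 3 ≤ G.degree v) (a b : GArc G) :
    (groverEnt G * groverEnt G) a b < 0 ↔ (arcO b = arcO a ∨ arcT b = arcT a) ∧ a ≠ b := by
  have hdo : (3 : ℝ) ≤ G.degree (arcO a) := by exact_mod_cast hdeg _
  have hdt : (3 : ℝ) ≤ G.degree (arcT b) := by exact_mod_cast hdeg _
  rw [groverEnt_mul_self_apply]
  by_cases hab : a = b
  · subst hab
    have key : 4 / ((G.degree (arcO a) : ℝ) * G.degree (arcT a)) - 2 / (G.degree (arcO a) : ℝ)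
        - 2 / (G.degree (arcT a) : ℝ) + 1
        = (1 - 2 / (G.degree (arcO a) : ℝ)) * (1 - 2 / (G.degree (arcT a) : ℝ)) := by
      field_simp
      ring
    have hadj : G.Adj (arcT a) (arcO a) := a.2.symm
    simp only [hadj, if_true, key, ne_eq, not_true_eq_false, and_false, iff_false, not_lt]
    apply mul_nonneg <;> rw [sub_nonneg, div_le_one (by positivity)] <;> linarith
  · set x := if G.Adj (arcT b) (arcO a) then 4 / ((G.degree (arcO a) : ℝ) * G.degree (arcT b))
      else 0 with hx_def
    have hx : 0 ≤ x ∧ x < 2 / (G.degree (arcO a) : ℝ) ∧ x < 2 / (G.degree (arcT b) : ℝ) := by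
      rw [hx_def]
      split_ifs
      · refine ⟨by positivity, ?_, ?_⟩ <;>
          rw [div_lt_div_iff₀ (by positivity) (by positivity)] <;> nlinarith
      · exact ⟨le_rfl, by positivity, by positivity⟩
    by_cases hO : arcO b = arcO a <;> by_cases hT : arcT b = arcT a
    · exact absurd (arc_ext hO.symm hT.symm) hab
    · refine iff_of_true ?_ ⟨Or.inl hO, hab⟩
      rw [if_pos hO, if_neg hT, if_neg hab, hO]
      linarith
    · refine iff_of_true ?_ ⟨Or.inr hT, hab⟩
      rw [if_neg hO, if_pos hT, if_neg hab]
      linarith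
    · refine iff_of_false ?_ fun h => h.1.elim hO hT
      rw [if_neg hO, if_neg hT, if_neg hab, not_lt]
      linarith

theorem suppNegR_groverEnt_mul_self (hdeg : ∀ v, 3 ≤ G.degree v) :
    suppNegR (groverEnt G * groverEnt G) =
      shiftSR G * suppPosR (groverEnt G) + suppPosR (groverEnt G) * shiftSR G := by
  have hdeg2 (v : V) : 2 ≤ G.degree v := (hdeg v).trans' (by norm_num)
  ext a b
  simp only [Matrix.add_apply, shiftSR_mul_apply, mul_shiftSR_apply, suppNegR, suppPosR,
    groverEnt_mul_self_neg_iff hdeg, groverEnt_pos_iff hdeg2, arcO_arcInv, arcT_arcInv,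
    arcInv_arcInv, arcInv_involutive.injective.ne_iff]
  by_cases hab : a = b
  · simp [hab]
  · have hexcl : ¬(arcO b = arcO a ∧ arcT b = arcT a) := fun h => hab (arc_ext h.1.symm h.2.symm)
    by_cases hO : arcO b = arcO a <;> by_cases hT : arcT b = arcT a <;> simp_all

end GroverSquare

theorem stmt14_general {V : Type} [Fintype V] [DecidableEq V] (k : ℕ) (hk : 3 ≤ k)
    (G : SimpleGraph V) [DecidableRel G.Adj]
    (hreg : ∀ v, G.degree v = k) :
    suppNegR (groverEnt G * groverEnt G) =
      shiftSR G * suppPosR (groverEnt G) + suppPosR (groverEnt G) * shiftSR G :=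
  suppNegR_groverEnt_mul_self fun v => hreg v ▸ hk

/-- For a `k`-regular connected graph with `k ≥ 3`, the negative support of `U²` satisfies
`(U²)⁻ = S U⁺ + U⁺ S`. -/
theorem stmt14 {V : Type} [Fintype V] [DecidableEq V] (k : ℕ) (hk : 3 ≤ k)
    (G : SimpleGraph V) [DecidableRel G.Adj] (hconn : G.Connected)
    (hreg : ∀ v, G.degree v = k) :
    suppNegR (groverEnt G * groverEnt G) =
      shiftSR G * suppPosR (groverEnt G) + suppPosR (groverEnt G) * shiftSR G :=
  stmt14_general k hk G hreg
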